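/- The second derivative of the real Gamma function at 1 minus the square of the first derivative of the real Gamma function at 1 equals π²/6; that is, Γ^(2)(1) − (Γ^(1)(1))² = π²/6. -/

import Mathlib

/-!
Write `g(s) = Γ(1 + s) Γ(1 - s)`. Since `Γ(1 + s) = s Γ(s)`, Euler's reflection formula becomes
`g(s) sin(π s) = π s` near `0`. Differentiating this identity three times at `0` gives
`3π g''(0) = π³ g(0)`, so `g''(0) = π²/3`, while the Leibniz rule and `Γ(1) = 1` give
`g''(0) = 2 (Γ''(1) - Γ'(1)²)`.
-/

open Real

theorem Complex.analyticAt_Gamma {s : ℂ} (hs : ∀ m : ℕ, s ≠ -m) :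
    AnalyticAt ℂ Complex.Gamma s := by
  simpa only [Pi.inv_def, inv_inv] using (Complex.differentiable_one_div_Gamma.analyticAt s).inv
    (inv_ne_zero (Complex.Gamma_ne_zero hs))

theorem Real.analyticAt_Gamma {x : ℝ} (hx : ∀ m : ℕ, x ≠ -m) : AnalyticAt ℝ Gamma x := by
  have hx' : ∀ m : ℕ, (x : ℂ) ≠ -m := fun m hm => hx m (by exact_mod_cast hm)
  simpa only [Complex.Gamma_ofReal, Complex.ofReal_re] using
    (Complex.analyticAt_Gamma hx').re_ofReal

theorem Real.Gamma_one_add_mul_Gamma_one_sub_mul_sin {s : ℝ} (hs : sin (π * s) ≠ 0) :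
    Gamma (1 + s) * Gamma (1 - s) * sin (π * s) = π * s := by
  have hs₀ : s ≠ 0 := by rintro rfl; simp at hs
  rw [add_comm, Gamma_add_one hs₀, mul_assoc s, Gamma_mul_Gamma_one_sub, mul_assoc,
    div_mul_cancel₀ _ hs, mul_comm]

theorem Real.Gamma_one_add_mul_Gamma_one_sub_mul_sin_eventuallyEq :
    (fun s => Gamma (1 + s) * Gamma (1 - s) * sin (π * s)) =ᶠ[nhds 0] fun s => π * s := by
  filter_upwards [Ioo_mem_nhds (neg_lt_zero.2 one_pos) one_pos] with s ⟨hs₁, hs₂⟩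
  rcases eq_or_ne s 0 with rfl | hs₀
  · simp
  refine Gamma_one_add_mul_Gamma_one_sub_mul_sin fun hsin => hs₀ ?_
  simpa [pi_ne_zero] using
    (sin_eq_zero_iff_of_lt_of_lt (by nlinarith [pi_pos]) (by nlinarith [pi_pos])).1 hsin

section Shift

variable {𝕜 : Type*} [NontriviallyNormedField 𝕜] {n : WithTop ℕ∞} {f : 𝕜 → 𝕜} {a x : 𝕜}

theorem ContDiffAt.comp_const_add (hf : ContDiffAt 𝕜 n f (a + x)) :
    ContDiffAt 𝕜 n (fun s => f (a + s)) x :=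
  hf.comp x (by fun_prop)

theorem ContDiffAt.comp_const_sub (hf : ContDiffAt 𝕜 n f (a - x)) :
    ContDiffAt 𝕜 n (fun s => f (a - s)) x :=
  hf.comp x (by fun_prop)

theorem iteratedDeriv_two_comp_add_mul_comp_sub (hf : ContDiffAt 𝕜 2 f a) :
    iteratedDeriv 2 (fun s => f (a + s) * f (a - s)) 0 =
      2 * (f a * iteratedDeriv 2 f a - iteratedDeriv 1 f a ^ 2) := by
  rw [iteratedDeriv_fun_mul (ContDiffAt.comp_const_add (by simpa using hf))
    (ContDiffAt.comp_const_sub (by simpa using hf))]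
  simp only [Finset.sum_range_succ, Finset.sum_range_zero, iteratedDeriv_comp_const_add,
    iteratedDeriv_comp_const_sub, add_zero, sub_zero]
  norm_num
  ring

end Shift

theorem iteratedDeriv_two_eq_of_mul_sin_eventuallyEq {g : ℝ → ℝ} {c : ℝ} (hc : c ≠ 0)
    (hg : ContDiffAt ℝ 3 g 0) (h : (fun s => g s * sin (c * s)) =ᶠ[nhds 0] fun s => c * s) :
    iteratedDeriv 2 g 0 = c ^ 2 / 3 * g 0 := by
  have h₃ := h.iteratedDeriv_eq 3
  rw [iteratedDeriv_fun_mul hg (by fun_prop), iteratedDeriv_const_mul_field,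
    iteratedDeriv_fun_id] at h₃
  simp only [Finset.sum_range_succ, Finset.sum_range_zero, iteratedDeriv_succ, iteratedDeriv_zero,
    iteratedDeriv_comp_const_mul contDiff_sin, Real.deriv_sin, deriv_cos', deriv.fun_neg'] at h₃
  norm_num at h₃
  rw [iteratedDeriv_succ, iteratedDeriv_one]
  refine mul_left_cancel₀ (mul_ne_zero three_ne_zero hc) ?_
  linear_combination h₃

/-- `Γ''(1) − (Γ'(1))² = π²/6`. -/
theorem gamma_second_deriv_sub_sq_first_deriv_one :
    iteratedDeriv 2 Real.Gamma 1 - (iteratedDeriv 1 Real.Gamma 1) ^ 2 = π ^ 2 / 6 := by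
  have hΓ : ContDiffAt ℝ 3 Gamma 1 :=
    (analyticAt_Gamma fun m hm => by linarith [m.cast_nonneg (α := ℝ)]).contDiffAt
  have hg : ContDiffAt ℝ 3 (fun s => Gamma (1 + s) * Gamma (1 - s)) 0 :=
    (ContDiffAt.comp_const_add (by simpa using hΓ)).mul
      (ContDiffAt.comp_const_sub (by simpa using hΓ))
  have key := iteratedDeriv_two_eq_of_mul_sin_eventuallyEq pi_ne_zero hg
    Gamma_one_add_mul_Gamma_one_sub_mul_sin_eventuallyEq
  rw [iteratedDeriv_two_comp_add_mul_comp_sub (hΓ.of_le (by norm_num))] at key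
  simp only [add_zero, sub_zero, Gamma_one, one_mul] at key
  linarith
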